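/- In a 2-connected graph G with colouring f, the minimum size of an f-respecting simultaneous dominating set equals |f⁻¹(1)| plus the minimum size of a vertex cover of the graph obtained from G by deleting all vertices of colour 1 and all edges joining two vertices of colour 0. -/

import Mathlib

open SimpleGraph

variable {V : Type*}

/-- Number of connected components of a graph. -/
noncomputable def numComponents (G : SimpleGraph V) : ℕ := Nat.card G.ConnectedComponent

/-- A vertex is a cut vertex if its removal increases the number of connected components. -/
def IsCutVertex (G : SimpleGraph V) (v : V) : Prop :=
  numComponents G < numComponents (G.induce {u | u ≠ v})

/-- `T` is a spanning tree of `G`: a subgraph on all vertices of `G` that is a tree. -/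
def IsSpanningTree (G T : SimpleGraph V) : Prop := T ≤ G ∧ T.IsTree

/-- `v` is dominated by `S` in the graph `T`. -/
def DominatedIn (T : SimpleGraph V) (S : Set V) (v : V) : Prop :=
  v ∈ S ∨ ∃ u ∈ S, T.Adj v u

/-- `v` is simultaneously dominated by `S`: dominated in every spanning tree of `G`. -/
def SimDominated (G : SimpleGraph V) (S : Set V) (v : V) : Prop :=
  ∀ T : SimpleGraph V, IsSpanningTree G T → DominatedIn T S v

/-- `S` is a simultaneous dominating set of `G`. -/
def IsSDSet (G : SimpleGraph V) (S : Set V) : Prop := ∀ v, SimDominated G S v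

/-- `C` is a vertex cover of `G`. -/
def IsVertexCover (G : SimpleGraph V) (C : Set V) : Prop :=
  ∀ ⦃u v : V⦄, G.Adj u v → u ∈ C ∨ v ∈ C

/-- A block of `G`: a maximal vertex set inducing a connected subgraph without cut vertices. -/
def IsBlock (G : SimpleGraph V) (B : Set V) : Prop :=
  B.Nonempty ∧ (G.induce B).Connected ∧ (∀ x, ¬ IsCutVertex (G.induce B) x) ∧
    ∀ B' : Set V, B ⊆ B' → (G.induce B').Connected →
      (∀ x, ¬ IsCutVertex (G.induce B') x) → B' = B

/-- 2-connected: connected, at least 3 vertices, no cut vertex. -/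
def TwoConnected (G : SimpleGraph V) [Fintype V] : Prop :=
  G.Connected ∧ 3 ≤ Fintype.card V ∧ ∀ v, ¬ IsCutVertex G v

/-- Colours 1, 0, 0̂. -/
inductive Col : Type
  | one | zero | zhat
deriving DecidableEq

/-- `S` is an `f`-respecting simultaneous dominating set of `G`. -/
def RespSDS (G : SimpleGraph V) (f : V → Col) (S : Set V) : Prop :=
  (∀ v, f v = Col.one → v ∈ S) ∧ ∀ v, f v = Col.zhat → SimDominated G S v

/-- A minimum `f`-respecting simultaneous dominating set. -/
def MinRespSDS (G : SimpleGraph V) (f : V → Col) (S : Set V) : Prop :=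
  RespSDS G f S ∧ ∀ S' : Set V, RespSDS G f S' → S.ncard ≤ S'.ncard

/-- The graph `(G − f⁻¹(1)) − E(G[f⁻¹(0)])`: delete all vertices of colour 1 (keeping them as
isolated vertices) and all edges between two vertices of colour 0. -/
def Gminus (G : SimpleGraph V) (f : V → Col) : SimpleGraph V where
  Adj u w := G.Adj u w ∧ f u ≠ Col.one ∧ f w ≠ Col.one ∧ ¬(f u = Col.zero ∧ f w = Col.zero)
  symm := ⟨fun u w ⟨h, h1, h2, h3⟩ => ⟨h.symm, h2, h1, fun ⟨a, b⟩ => h3 ⟨b, a⟩⟩⟩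
  loopless := ⟨fun u h => G.loopless.irrefl u h.1⟩

/-! In a 2-connected graph `G − v` is connected for every `v`, so a spanning tree of `G` may
attach `v` as a leaf to any chosen neighbour `u`. Hence `v` is dominated in every spanning tree
exactly when `v ∈ S` or all of `N(v)` lies in `S`. For a `0̂`-vertex `v` this says that `S` covers
every edge from `v` to a vertex not of colour `1`; these are exactly the edges of `Gminus G f`.
So the `f`-respecting SD-sets are the vertex covers of `Gminus G f` containing `f⁻¹(1)`, and
removing `f⁻¹(1)` from a cover leaves a cover, since no edge of `Gminus G f` meets `f⁻¹(1)`. -/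

variable {G : SimpleGraph V}

lemma numComponents_eq_one (h : G.Connected) : numComponents G = 1 := by
  have := h.preconnected.subsingleton_connectedComponent
  have : Nonempty G.ConnectedComponent := h.nonempty.map G.connectedComponentMk
  exact Nat.card_eq_one_iff_unique.mpr ⟨inferInstance, inferInstance⟩

lemma connected_of_numComponents_le_one [Finite V] [Nonempty V] (h : numComponents G ≤ 1) :
    G.Connected := by
  have : Finite G.ConnectedComponent := Quot.finite _
  have := Finite.card_le_one_iff_subsingleton.mp h
  exact ⟨fun a b => ConnectedComponent.exact (Subsingleton.elim _ _)⟩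

lemma TwoConnected.connected_induce_ne [Fintype V] (hG : TwoConnected G) (v : V) :
    (G.induce {u | u ≠ v}).Connected := by
  obtain ⟨hconn, hcard, hcut⟩ := hG
  obtain ⟨w, hw⟩ := Fintype.exists_ne_of_one_lt_card (by omega) v
  have : Nonempty ({u | u ≠ v} : Set V) := ⟨⟨w, hw⟩⟩
  apply connected_of_numComponents_le_one
  simpa [IsCutVertex, numComponents_eq_one hconn] using hcut v

namespace SimpleGraph

def keepOnlyEdgeAt (G : SimpleGraph V) (v u : V) : SimpleGraph V where
  Adj a b := G.Adj a b ∧ (a = v → b = u) ∧ (b = v → a = u)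
  symm := ⟨fun _ _ h => ⟨h.1.symm, h.2.2, h.2.1⟩⟩
  loopless := ⟨fun a h => G.loopless.irrefl a h.1⟩

lemma keepOnlyEdgeAt_adj {v u a b : V} :
    (G.keepOnlyEdgeAt v u).Adj a b ↔ G.Adj a b ∧ (a = v → b = u) ∧ (b = v → a = u) :=
  Iff.rfl

lemma keepOnlyEdgeAt_le (v u : V) : G.keepOnlyEdgeAt v u ≤ G := fun _ _ h => h.1

lemma connected_keepOnlyEdgeAt {u v : V} (hv : (G.induce {w | w ≠ v}).Connected)
    (hvu : G.Adj v u) : (G.keepOnlyEdgeAt v u).Connected := by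
  have hu : u ≠ v := hvu.ne.symm
  let φ : G.induce {w | w ≠ v} →g G.keepOnlyEdgeAt v u :=
    ⟨Subtype.val, fun {a b} h =>
      keepOnlyEdgeAt_adj.mpr ⟨h, fun ha => absurd ha a.2, fun hb => absurd hb b.2⟩⟩
  refine (connected_iff_exists_forall_reachable _).mpr ⟨u, fun a => ?_⟩
  by_cases ha : a = v
  · subst ha
    exact Adj.reachable <| keepOnlyEdgeAt_adj.mpr ⟨hvu.symm, fun h => absurd h hu, fun _ => rfl⟩
  · obtain ⟨p⟩ := hv.preconnected ⟨u, hu⟩ ⟨a, ha⟩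
    exact (p.map φ).reachable

lemma exists_isSpanningTree_forall_adj_eq {u v : V} (hv : (G.induce {w | w ≠ v}).Connected)
    (hvu : G.Adj v u) : ∃ T, IsSpanningTree G T ∧ ∀ w, T.Adj v w → w = u := by
  obtain ⟨T, hTle, hT⟩ := (connected_keepOnlyEdgeAt hv hvu).exists_isTree_le
  exact ⟨T, ⟨hTle.trans (keepOnlyEdgeAt_le v u), hT⟩,
    fun w h => (keepOnlyEdgeAt_adj.mp (hTle h)).2.1 rfl⟩

end SimpleGraph

theorem simDominated_iff {S : Set V} {v : V} (hv : (G.induce {w | w ≠ v}).Connected) :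
    SimDominated G S v ↔ v ∈ S ∨ ∀ u, G.Adj v u → u ∈ S := by
  constructor
  · intro h
    by_contra! ⟨hvS, u, hvu, huS⟩
    obtain ⟨T, hT, hTv⟩ := exists_isSpanningTree_forall_adj_eq hv hvu
    obtain hvS' | ⟨w, hwS, hvw⟩ := h T hT
    · exact hvS hvS'
    · exact huS (hTv w hvw ▸ hwS)
  · rintro (hvS | hN) T ⟨hTle, hT⟩
    · exact Or.inl hvS
    · obtain ⟨⟨w, hw⟩⟩ := hv.nonempty
      have : Nontrivial V := ⟨⟨w, v, hw⟩⟩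
      obtain ⟨u, hvu⟩ := hT.connected.preconnected.exists_adj_of_nontrivial v
      exact Or.inr ⟨u, hN u (hTle hvu), hvu⟩

variable {f : V → Col}

lemma IsVertexCover.mono {C D : Set V} (hC : _root_.IsVertexCover G C) (hCD : C ⊆ D) :
    _root_.IsVertexCover G D :=
  fun _ _ h => (hC h).imp (@hCD _) (@hCD _)

lemma IsVertexCover.diff_preimage_one {C : Set V} (hC : _root_.IsVertexCover (Gminus G f) C) :
    _root_.IsVertexCover (Gminus G f) (C \ f ⁻¹' {Col.one}) :=
  fun _ _ h => (hC h).imp (fun hu => ⟨hu, h.2.1⟩) (fun hw => ⟨hw, h.2.2.1⟩)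

theorem respSDS_iff {S : Set V} (hG : ∀ v, (G.induce {w | w ≠ v}).Connected) :
    RespSDS G f S ↔ f ⁻¹' {Col.one} ⊆ S ∧ _root_.IsVertexCover (Gminus G f) S := by
  constructor
  · rintro ⟨hone, hzhat⟩
    refine ⟨fun v hv => hone v hv, fun a b ⟨hab, ha, hb, h00⟩ => ?_⟩
    -- an edge of `Gminus G f` has an endpoint of colour `0̂`
    have : f a = Col.zhat ∨ f b = Col.zhat := by
      cases h : f a <;> cases h' : f b <;> simp_all
    rcases this with ha' | hb'
    · exact ((simDominated_iff (hG a)).mp (hzhat a ha')).imp_right (· b hab)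
    · exact ((simDominated_iff (hG b)).mp (hzhat b hb')).symm.imp_left (· a hab.symm)
  · rintro ⟨hone, hC⟩
    refine ⟨fun v hv => hone hv, fun v hv => (simDominated_iff (hG v)).mpr ?_⟩
    refine or_iff_not_imp_left.mpr fun hvS u hvu => ?_
    by_cases hu : f u = Col.one
    · exact hone hu
    · have hv' : f v ≠ Col.one := by simp [hv]
      exact (hC ⟨hvu, hv', hu, fun h => by simp [hv] at h⟩).resolve_left hvS

lemma Nat.sInf_eq_add_sInf {A B : Set ℕ} {c : ℕ} (hB : B.Nonempty)
    (hBA : ∀ b ∈ B, ∃ a ∈ A, a ≤ c + b) (hAB : ∀ a ∈ A, ∃ b ∈ B, c + b ≤ a) :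
    sInf A = c + sInf B := by
  obtain ⟨a, ha, hab⟩ := hBA _ (Nat.sInf_mem hB)
  obtain ⟨b, hb, hba⟩ := hAB _ (Nat.sInf_mem ⟨a, ha⟩)
  have := Nat.sInf_le ha
  have := Nat.sInf_le hb
  omega

/-- In a 2-connected graph `G` with colouring `f`, the minimum size of an
`f`-respecting SD-set equals `|f⁻¹(1)|` plus the minimum size of a vertex cover of
`(G − f⁻¹(1)) − E(G[f⁻¹(0)])`. -/
theorem stmt12 [Fintype V] (G : SimpleGraph V) (hG : TwoConnected G) (f : V → Col) :
    sInf {n : ℕ | ∃ S : Set V, RespSDS G f S ∧ S.ncard = n} =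
      (f ⁻¹' {Col.one}).ncard +
        sInf {n : ℕ | ∃ C : Set V, _root_.IsVertexCover (Gminus G f) C ∧ C.ncard = n} := by
  have hresp := fun S => respSDS_iff (S := S) (f := f) hG.connected_induce_ne
  refine Nat.sInf_eq_add_sInf ⟨_, Set.univ, fun _ _ _ => Or.inl trivial, rfl⟩ ?_ ?_
  · rintro _ ⟨C, hC, rfl⟩
    refine ⟨_, ⟨f ⁻¹' {Col.one} ∪ C, ?_, rfl⟩, Set.ncard_union_le _ _⟩
    exact (hresp _).mpr ⟨Set.subset_union_left, hC.mono Set.subset_union_right⟩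
  · rintro _ ⟨S, hS, rfl⟩
    obtain ⟨hone, hC⟩ := (hresp S).mp hS
    refine ⟨_, ⟨_, hC.diff_preimage_one, rfl⟩, ?_⟩
    rw [add_comm, Set.ncard_sdiff_add_ncard_of_subset hone]
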